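/- Let C be a k-dimensional constant weight code of weight d over a finite field F_q with q elements, with k ≥ 1. Then C meets its Griesmer bound with equality: d_k = ∑_{i=0}^{k−1} ⌈d/q^i⌉, where d_k = w(C) is the weight of the whole code C. -/

import Mathlib

/-- The support of a subcode `D` of `F_q^n`. -/
def codeSupp {F : Type*} [Field F] {n : ℕ} (D : Submodule F (Fin n → F)) : Set (Fin n) :=
  {x | ∃ d ∈ D, d x ≠ 0}

/-- The weight of a subcode: the cardinality of its support. -/
noncomputable def codeWt {F : Type*} [Field F] {n : ℕ} (D : Submodule F (Fin n → F)) : ℕ :=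
  (codeSupp D).ncard

/-!
Double count the pairs `(c, x)` with `c ∈ C` and `c x ≠ 0`. A coordinate `x` in the support of
`C` is nonzero on the complement of a hyperplane of `C`, i.e. on `q ^ k - q ^ (k - 1)` codewords,
while each of the `q ^ k - 1` nonzero codewords has weight `d`. Hence
`w(C) * q ^ (k - 1) = (1 + q + ⋯ + q ^ (k - 1)) * d`; the geometric sum is prime to `q`, so
`q ^ (k - 1)` divides `d` and every `d ⌈/⌉ q ^ i` is an exact quotient.
-/

open Finset

theorem Nat.coprime_pow_geom_sum_succ (q e k : ℕ) :
    Nat.Coprime (q ^ e) (∑ i ∈ range (k + 1), q ^ i) := by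
  refine Nat.Coprime.pow_left _ ?_
  rw [geom_sum_succ, Nat.coprime_mul_left_add_right]
  exact Nat.coprime_one_right q

theorem sum_range_ceilDiv_pow_mul {q : ℕ} (hq : 0 < q) (e m : ℕ) :
    ∑ i ∈ range (e + 1), (q ^ e * m) ⌈/⌉ q ^ i = (∑ i ∈ range (e + 1), q ^ i) * m := by
  rw [← sum_range_reflect, sum_mul]
  refine sum_congr rfl fun i hi => ?_
  have hie : i ≤ e := Nat.lt_succ_iff.mp (mem_range.mp hi)
  rw [Nat.add_sub_cancel, ← Nat.sub_add_cancel hie, pow_add, mul_assoc, Nat.add_sub_cancel]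
  exact smul_ceilDiv (pow_pos hq _) _

theorem eq_sum_ceilDiv_pow_of_mul_eq {q e w d : ℕ} (hq : 2 ≤ q)
    (h : w * (q ^ (e + 1) - q ^ e) = (q ^ (e + 1) - 1) * d) :
    w = ∑ i ∈ range (e + 1), d ⌈/⌉ q ^ i := by
  set S := ∑ i ∈ range (e + 1), q ^ i
  have hpow : q ^ (e + 1) - q ^ e = q ^ e * (q - 1) := by rw [pow_succ, Nat.mul_sub_one]
  have hgeom : q ^ (e + 1) - 1 = S * (q - 1) := by
    have := geom_sum_mul_add (q - 1) (e + 1)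
    rw [Nat.sub_add_cancel (by omega : 1 ≤ q)] at this
    rw [← this, Nat.add_sub_cancel]
  have hwd : w * q ^ e = S * d := by
    refine Nat.eq_of_mul_eq_mul_right (by omega : 0 < q - 1) ?_
    rw [mul_assoc, ← hpow, h, hgeom, mul_right_comm]
  obtain ⟨m, rfl⟩ : q ^ e ∣ d :=
    (Nat.coprime_pow_geom_sum_succ q e e).dvd_of_dvd_mul_left ⟨w, by rw [← hwd, mul_comm]⟩
  rw [sum_range_ceilDiv_pow_mul (by omega)]
  refine Nat.eq_of_mul_eq_mul_right (pow_pos (by omega : 0 < q) e) ?_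
  rw [hwd]; ring

theorem hammingNorm_eq_ncard {ι β : Type*} [Fintype ι] [DecidableEq β] [Zero β]
    (x : ι → β) : hammingNorm x = {i | x i ≠ 0}.ncard := by
  rw [hammingNorm, ← Set.ncard_coe_finset]
  simp

section Counting

open scoped Classical

variable {F : Type*} [Field F] [Fintype F] {n : ℕ} (C : Submodule F (Fin n → F))

theorem card_apply_ne_zero_of_mem_codeSupp {x : Fin n} (hx : x ∈ codeSupp C) :
    #{c : C | (c : Fin n → F) x ≠ 0} =
      Fintype.card F ^ Module.finrank F C - Fintype.card F ^ (Module.finrank F C - 1) := by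
  obtain ⟨c₀, hc₀, hc₀x⟩ := hx
  let φ : C →ₗ[F] F := (LinearMap.proj x).comp C.subtype
  have hφ : LinearMap.range φ = ⊤ := LinearMap.range_eq_top.mpr fun b =>
    ⟨(b / c₀ x) • ⟨c₀, hc₀⟩, by simp [φ, hc₀x]⟩
  have hker : Module.finrank F (LinearMap.ker φ) = Module.finrank F C - 1 := by
    have := LinearMap.finrank_range_add_finrank_ker φ
    rw [hφ, finrank_top, Module.finrank_self] at this
    omega
  have hzero :
      #{c : C | (c : Fin n → F) x = 0} = Fintype.card F ^ (Module.finrank F C - 1) := by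
    rw [← hker, ← Fintype.card_subtype]
    exact Module.card_eq_pow_finrank (K := F) (V := LinearMap.ker φ)
  have htotal := card_filter_add_card_filter_not (s := univ) fun c : C => (c : Fin n → F) x = 0
  rw [card_univ, Module.card_eq_pow_finrank (K := F), hzero] at htotal
  simp only [ne_eq]
  omega

theorem sum_hammingNorm_eq_codeWt_mul :
    ∑ c : C, hammingNorm (c : Fin n → F) =
      codeWt C *
        (Fintype.card F ^ Module.finrank F C - Fintype.card F ^ (Module.finrank F C - 1)) := by
  calc ∑ c : C, hammingNorm (c : Fin n → F)
      = ∑ x, #{c : C | (c : Fin n → F) x ≠ 0} := by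
        simp only [hammingNorm, card_filter]
        exact sum_comm
    _ = ∑ x ∈ (codeSupp C).toFinset, #{c : C | (c : Fin n → F) x ≠ 0} := by
        refine (sum_subset (subset_univ _) fun x _ hx => ?_).symm
        rw [Set.mem_toFinset] at hx
        exact card_eq_zero.mpr (filter_eq_empty_iff.mpr fun c _ hc => hx ⟨c, c.2, hc⟩)
    _ = codeWt C * _ := by
        rw [sum_congr rfl fun x hx => card_apply_ne_zero_of_mem_codeSupp C (Set.mem_toFinset.mp hx),
          sum_const, smul_eq_mul, codeWt, Set.ncard_eq_toFinset_card']

theorem sum_hammingNorm_of_constant_weight {d : ℕ}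
    (hconst : ∀ c ∈ C, c ≠ 0 → hammingNorm c = d) :
    ∑ c : C, hammingNorm (c : Fin n → F) = (Fintype.card F ^ Module.finrank F C - 1) * d := by
  rw [← add_sum_erase _ _ (mem_univ 0), Submodule.coe_zero, hammingNorm_zero, zero_add,
    sum_congr rfl fun c hc => hconst c.1 c.2 (by simpa using ne_of_mem_erase hc), sum_const,
    card_erase_of_mem (mem_univ _), card_univ, Module.card_eq_pow_finrank (K := F) (V := C),
    smul_eq_mul]

end Counting

/-- A constant weight code of weight `d` and dimension `k ≥ 1` meets the Griesmer bound
with equality: `d_k = w(C) = ∑_{i=0}^{k-1} ⌈d / q^i⌉`. -/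
theorem constant_weight_meets_griesmer
    {F : Type*} [Field F] [Fintype F] {n k q d : ℕ} (hq : Fintype.card F = q)
    (C : Submodule F (Fin n → F)) (hk : Module.finrank F C = k) (hk1 : 1 ≤ k)
    (hconst : ∀ c ∈ C, c ≠ 0 → ({x | c x ≠ 0} : Set (Fin n)).ncard = d) :
    codeWt C = ∑ i ∈ Finset.range k, d ⌈/⌉ q ^ i := by
  classical
  subst hq
  obtain ⟨e, rfl⟩ : ∃ e, k = e + 1 := ⟨k - 1, by omega⟩
  have hsupp := sum_hammingNorm_eq_codeWt_mul C
  have hweight := sum_hammingNorm_of_constant_weight C fun c hc h0 =>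
    (hammingNorm_eq_ncard c).trans (hconst c hc h0)
  simp only [hk, Nat.add_sub_cancel] at hsupp hweight
  exact eq_sum_ceilDiv_pow_of_mul_eq Fintype.one_lt_card (hsupp.symm.trans hweight)
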